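/- Let g be a Riemannian metric on an open set U ⊆ ℝ³, let ξ be a smooth vector field on U with |ξ|²_g > 0 and Euclidean divergence div ξ = 0, let C : ℝ → ℝ be smooth, and let ψ : U → ℝ be smooth with ξ · ∇ψ = 0 on U. Define B_g := |ξ|_g^{-2}(C(ψ) ξ + √|g| (ξ ×_g ∇_g ψ)). Then the Lie derivative of B_g along ξ satisfies L_ξ B_g = −|ξ|_g^{-2} (L_ξ g)(ξ, B_g) ξ on U. In particular, if ξ is a g-Killing field ((L_ξ g)_{ij} = 0), then L_ξ B_g = 0. -/

import Mathlib

noncomputable section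

/-- Points of `ℝ³`. -/
abbrev Pt : Type := Fin 3 → ℝ

/-- Vector fields on `ℝ³`. -/
abbrev VF : Type := Pt → Pt

/-- A (matrix-valued) metric on `ℝ³`. -/
abbrev Met3 : Type := Pt → Matrix (Fin 3) (Fin 3) ℝ

/-- Partial derivative `∂ᵢ f` in the standard coordinates. -/
def pd (i : Fin 3) (f : Pt → ℝ) (x : Pt) : ℝ := fderiv ℝ f x (Pi.single i 1)

/-- The Levi-Civita symbol `ε_{ijk}`. -/
def eps (i j k : Fin 3) : ℝ :=
  ((j.val : ℝ) - (i.val : ℝ)) * ((k.val : ℝ) - (i.val : ℝ)) * ((k.val : ℝ) - (j.val : ℝ)) / 2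

/-- `g` is a smooth Riemannian metric on `U`: smooth coefficients, symmetric
positive-definite at every point of `U`. -/
def SmoothMetricOn (g : Met3) (U : Set Pt) : Prop :=
  (∀ i j, ContDiffOn ℝ (⊤ : ℕ∞) (fun x => g x i j) U) ∧ (∀ x ∈ U, (g x).PosDef)

/-- `√|g|`, square root of the determinant of the metric. -/
def sdet (g : Met3) (x : Pt) : ℝ := Real.sqrt (g x).det

/-- Metric dot product `X ·_g Y = g_{ij} X^i Y^j`. -/
def gdot (g : Met3) (X Y : VF) (x : Pt) : ℝ := ∑ i, ∑ j, g x i j * X x i * Y x j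

/-- `|X|²_g`. -/
def gnormSq (g : Met3) (X : VF) (x : Pt) : ℝ := gdot g X X x

/-- Metric gradient `(∇_g f)^i = g^{ij} ∂_j f`. -/
def ggrad (g : Met3) (f : Pt → ℝ) : VF := fun x i => ∑ j, (g x)⁻¹ i j * pd j f x

/-- Metric cross product `(X ×_g Y)^k = √|g| g^{kℓ} ε_{ijℓ} X^i Y^j`. -/
def gcross (g : Met3) (X Y : VF) : VF :=
  fun x k => sdet g x * ∑ l, ∑ i, ∑ j, (g x)⁻¹ k l * eps i j l * X x i * Y x j

/-- Metric divergence `div_g X = |g|^{-1/2} ∂_i(√|g| X^i)`. -/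
def gdiv (g : Met3) (X : VF) (x : Pt) : ℝ :=
  (sdet g x)⁻¹ * ∑ i, pd i (fun y => sdet g y * X y i) x

/-- Metric curl `(curl_g X)^m = √|g| g^{mn} g^{ik} g^{jℓ} ε_{kℓn} ∂_i(g_{jp}X^p)`. -/
def gcurl (g : Met3) (X : VF) : VF :=
  fun x m => sdet g x * ∑ n, ∑ i, ∑ k, ∑ j, ∑ l,
    (g x)⁻¹ m n * (g x)⁻¹ i k * (g x)⁻¹ j l * eps k l n *
      pd i (fun y => ∑ p, g y j p * X y p) x

/-- Christoffel symbols `Γ^k_{ij}`. -/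
def christoffel (g : Met3) (x : Pt) (k i j : Fin 3) : ℝ :=
  (1 / 2) * ∑ l, (g x)⁻¹ k l *
    (pd i (fun y => g y j l) x + pd j (fun y => g y i l) x - pd l (fun y => g y i j) x)

/-- Covariant derivative `(∇_X Y)^i = X^j ∂_j Y^i + Γ^i_{jk} X^j Y^k`. -/
def covD (g : Met3) (X Y : VF) : VF :=
  fun x i => (∑ j, X x j * pd j (fun y => Y y i) x)
    + ∑ j, ∑ k, christoffel g x i j k * X x j * Y x k

/-- Lie derivative of a vector field, `(L_X Y)^i = X^j ∂_j Y^i − Y^j ∂_j X^i`. -/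
def lieVF (X Y : VF) : VF :=
  fun x i => (∑ j, X x j * pd j (fun y => Y y i) x) - ∑ j, Y x j * pd j (fun y => X y i) x

/-- Deformation tensor `(L_X g)_{ij} = ∂_i(g_{jℓ}X^ℓ) + ∂_j(g_{iℓ}X^ℓ) − 2Γ^k_{ij} g_{kℓ}X^ℓ`. -/
def lieMet (g : Met3) (X : VF) (x : Pt) (i j : Fin 3) : ℝ :=
  pd i (fun y => ∑ l, g y j l * X y l) x + pd j (fun y => ∑ l, g y i l * X y l) x
    - 2 * ∑ k, ∑ l, christoffel g x k i j * g x k l * X x l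

/-- Pairing `(L_X g)(A, B) = (L_X g)_{ij} A^i B^j`. -/
def lieMetPair (g : Met3) (X A B : VF) (x : Pt) : ℝ :=
  ∑ i, ∑ j, lieMet g X x i j * A x i * B x j

/-- `ξ` is a `g`-Killing field on `U`. -/
def IsKillingOn (g : Met3) (ξ : VF) (U : Set Pt) : Prop :=
  ∀ x ∈ U, ∀ i j, lieMet g ξ x i j = 0

/-- Euclidean dot product. -/
def edot (X Y : VF) (x : Pt) : ℝ := ∑ i, X x i * Y x i

/-- Euclidean gradient. -/
def egrad (f : Pt → ℝ) : VF := fun x i => pd i f x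

/-- Euclidean cross product. -/
def ecross (X Y : VF) : VF := fun x k => ∑ i, ∑ j, eps i j k * X x i * Y x j

/-- Euclidean divergence. -/
def ediv (X : VF) (x : Pt) : ℝ := ∑ i, pd i (fun y => X y i) x

/-- Euclidean curl. -/
def ecurl (X : VF) : VF := fun x m => ∑ i, ∑ j, eps i j m * pd i (fun y => X y j) x

/-- Euclidean deformation tensor pairing `(L_ξ δ)(A,B) = A^i (∂_i ξ^j + ∂_j ξ^i) B^j`. -/
def lieEuclPair (ξ A B : VF) (x : Pt) : ℝ :=
  ∑ i, ∑ j, A x i * (pd i (fun y => ξ y j) x + pd j (fun y => ξ y i) x) * B x j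

/-- The magnetic field ansatz `B_g = |ξ|_g^{-2} (C(ψ) ξ + √|g| (ξ ×_g ∇_g ψ))`. -/
def Bg (g : Met3) (ξ : VF) (C : ℝ → ℝ) (ψ : Pt → ℝ) : VF :=
  fun x i => (gnormSq g ξ x)⁻¹ * (C (ψ x) * ξ x i + sdet g x * gcross g ξ (ggrad g ψ) x i)


open scoped Topology

set_option maxHeartbeats 2000000

section Helpers

private lemma trich (q : Fin 3) : q = 0 ∨ q = 1 ∨ q = 2 := by omega

private lemma pd_congr_nhds {f h : Pt → ℝ} {x : Pt} (hfh : f =ᶠ[𝓝 x] h) (j : Fin 3) :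
    pd j f x = pd j h x := by unfold pd; rw [hfh.fderiv_eq]

private lemma pd_hasFDerivAt {f : Pt → ℝ} {L : Pt →L[ℝ] ℝ} {x : Pt} (h : HasFDerivAt f L x)
    (j : Fin 3) : pd j f x = L (Pi.single j 1) := by unfold pd; rw [h.fderiv]

private lemma pd_const {x : Pt} (c : ℝ) (j : Fin 3) : pd j (fun _ => c) x = 0 := by
  unfold pd; rw [fderiv_fun_const]; simp

private lemma pd_add {f h : Pt → ℝ} {x : Pt} (hf : DifferentiableAt ℝ f x)
    (hh : DifferentiableAt ℝ h x) (j : Fin 3) :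
    pd j (fun y => f y + h y) x = pd j f x + pd j h x := by
  unfold pd; rw [fderiv_fun_add hf hh]; simp

private lemma pd_mul {f h : Pt → ℝ} {x : Pt} (hf : DifferentiableAt ℝ f x)
    (hh : DifferentiableAt ℝ h x) (j : Fin 3) :
    pd j (fun y => f y * h y) x = pd j f x * h x + f x * pd j h x := by
  unfold pd; rw [fderiv_fun_mul hf hh]; simp; ring

private lemma pd_sum {f : Fin 3 → Pt → ℝ} {x : Pt} (hf : ∀ i, DifferentiableAt ℝ (f i) x)
    (j : Fin 3) : pd j (fun y => ∑ i, f i y) x = ∑ i, pd j (f i) x := by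
  unfold pd; rw [fderiv_fun_sum (fun i _ => hf i)]; simp

private lemma pd_inv {f : Pt → ℝ} {x : Pt} (hf : DifferentiableAt ℝ f x) (h0 : f x ≠ 0)
    (j : Fin 3) : pd j (fun y => (f y)⁻¹) x = -((f x)^2)⁻¹ * pd j f x := by
  have h := (hasDerivAt_inv h0).comp_hasFDerivAt x hf.hasFDerivAt
  have h' : HasFDerivAt (fun y => (f y)⁻¹) (-(f x ^ 2)⁻¹ • fderiv ℝ f x) x := h
  rw [pd_hasFDerivAt h']; simp [pd]

private lemma pd_comp {C : ℝ → ℝ} {ψ : Pt → ℝ} {x : Pt} (hC : DifferentiableAt ℝ C (ψ x))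
    (hψ : DifferentiableAt ℝ ψ x) (j : Fin 3) :
    pd j (fun y => C (ψ y)) x = deriv C (ψ x) * pd j ψ x := by
  have h := (hC.hasDerivAt).comp_hasFDerivAt x hψ.hasFDerivAt
  have h' : HasFDerivAt (fun y => C (ψ y)) (deriv C (ψ x) • fderiv ℝ ψ x) x := h
  rw [pd_hasFDerivAt h']; simp [pd]

private lemma diffAt_of_cdOn {f : Pt → ℝ} {U : Set Pt} {x : Pt} (hU : IsOpen U)
    (hf : ContDiffOn ℝ (⊤ : ℕ∞) f U) (hx : x ∈ U) : DifferentiableAt ℝ f x :=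
  (hf.contDiffAt (hU.mem_nhds hx)).differentiableAt (by simp)

private lemma contDiffOn_pd {f : Pt → ℝ} {U : Set Pt} (hU : IsOpen U)
    (hf : ContDiffOn ℝ (⊤ : ℕ∞) f U) (m : Fin 3) : ContDiffOn ℝ (⊤ : ℕ∞) (fun y => pd m f y) U :=
  (hf.fderiv_of_isOpen hU (by simp)).clm_apply contDiffOn_const

private lemma pd_pd_symm {f : Pt → ℝ} {U : Set Pt} {x : Pt} (hU : IsOpen U)
    (hf : ContDiffOn ℝ (⊤ : ℕ∞) f U) (hx : x ∈ U) (j m : Fin 3) :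
    pd j (fun y => pd m f y) x = pd m (fun y => pd j f y) x := by
  have hD : DifferentiableAt ℝ (fderiv ℝ f) x :=
    ((hf.fderiv_of_isOpen hU (m := (⊤ : ℕ∞)) (by simp)).contDiffAt (hU.mem_nhds hx)).differentiableAt (by simp)
  have key : ∀ a b : Fin 3, pd a (fun y => pd b f y) x
      = fderiv ℝ (fderiv ℝ f) x (Pi.single a 1) (Pi.single b 1) := by
    intro a b
    have h1 : pd a (fun y => pd b f y) x
        = fderiv ℝ (fun y => (fderiv ℝ f y) (Pi.single b 1)) x (Pi.single a 1) := rfl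
    rw [h1, fderiv_clm_apply hD (differentiableAt_const _)]
    simp
  rw [key, key]
  exact ((hf.contDiffAt (hU.mem_nhds hx)).isSymmSndFDerivAt (by rw [minSmoothness_of_isRCLikeNormedField]; exact WithTop.coe_le_coe.mpr le_top)).eq _ _

private lemma adj_entries (M : Matrix (Fin 3) (Fin 3) ℝ) :
    (M.adjugate 0 0 = M 1 1 * M 2 2 - M 1 2 * M 2 1) ∧
    (M.adjugate 0 1 = -(M 0 1 * M 2 2) + M 0 2 * M 2 1) ∧
    (M.adjugate 0 2 = M 0 1 * M 1 2 - M 0 2 * M 1 1) ∧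
    (M.adjugate 1 0 = -(M 1 0 * M 2 2) + M 1 2 * M 2 0) ∧
    (M.adjugate 1 1 = M 0 0 * M 2 2 - M 0 2 * M 2 0) ∧
    (M.adjugate 1 2 = -(M 0 0 * M 1 2) + M 0 2 * M 1 0) ∧
    (M.adjugate 2 0 = M 1 0 * M 2 1 - M 1 1 * M 2 0) ∧
    (M.adjugate 2 1 = -(M 0 0 * M 2 1) + M 0 1 * M 2 0) ∧
    (M.adjugate 2 2 = M 0 0 * M 1 1 - M 0 1 * M 1 0) := by
  refine ⟨?_,?_,?_,?_,?_,?_,?_,?_,?_⟩ <;> rw [Matrix.adjugate_fin_three] <;>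
    simp [Matrix.cons_val_zero, Matrix.cons_val_one]

private lemma adj_cross (M : Matrix (Fin 3) (Fin 3) ℝ) (hsym : ∀ i j, M i j = M j i)
    (X v : Fin 3 → ℝ) (k : Fin 3) :
    ∑ l, ∑ i, ∑ j, M.adjugate k l * eps i j l * X i * (∑ m, M.adjugate j m * v m)
      = M.det * ∑ n, ∑ m, eps n m k * (∑ p, M n p * X p) * v m := by
  obtain ⟨h00,h01,h02,h10,h11,h12,h20,h21,h22⟩ := adj_entries M
  have e1 := hsym 1 0; have e2 := hsym 2 0; have e3 := hsym 2 1
  rcases trich k with rfl|rfl|rfl <;>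
  · simp only [Fin.sum_univ_three, Fin.isValue, h00,h01,h02,h10,h11,h12,h20,h21,h22,
      e1,e2,e3, Matrix.det_fin_three]
    norm_num [eps]
    ring

private lemma cross_simp (M : Matrix (Fin 3) (Fin 3) ℝ) (hsym : ∀ i j, M i j = M j i)
    (hdet : M.det ≠ 0) (X v : Fin 3 → ℝ) (k : Fin 3) :
    M.det * ∑ l, ∑ i, ∑ j, M⁻¹ k l * eps i j l * X i * (∑ m, M⁻¹ j m * v m)
      = ∑ n, ∑ m, eps n m k * (∑ p, M n p * X p) * v m := by
  have hMinv : ∀ i j, M⁻¹ i j = M.det⁻¹ * M.adjugate i j := by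
    intro i j; rw [Matrix.inv_def]; simp [Matrix.smul_apply, smul_eq_mul]
  have hS := adj_cross M hsym X v k
  have hinv : M.det⁻¹ * M.det = 1 := inv_mul_cancel₀ hdet
  calc M.det * ∑ l, ∑ i, ∑ j, M⁻¹ k l * eps i j l * X i * (∑ m, M⁻¹ j m * v m)
      = (M.det⁻¹ * M.det) * ((M.det⁻¹ * M.det) *
        (∑ l, ∑ i, ∑ j, M.adjugate k l * eps i j l * X i * (∑ m, M.adjugate j m * v m))
          / M.det) := by
        simp only [hMinv, Finset.mul_sum, Finset.sum_div]
        congr 1; ext l; congr 1; ext i; congr 1; ext j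
        refine Finset.sum_congr rfl fun m _ => ?_
        field_simp
    _ = _ := by rw [hinv, hS]; field_simp

private lemma master
    (G : Fin 3 → Fin 3 → ℝ) (dG : Fin 3 → Fin 3 → Fin 3 → ℝ)
    (X : Fin 3 → ℝ) (dX : Fin 3 → Fin 3 → ℝ) (v : Fin 3 → ℝ) (H : Fin 3 → Fin 3 → ℝ)
    (c c' A : ℝ)
    (u W a dA B : Fin 3 → ℝ) (du pdW pdB L : Fin 3 → Fin 3 → ℝ)
    (hGs : ∀ i j, G i j = G j i)
    (hdGs : ∀ l i j, dG l i j = dG l j i)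
    (hA : A = ∑ i, ∑ j, G i j * X i * X j)
    (hA0 : A ≠ 0)
    (hdiv : ∑ i, dX i i = 0)
    (ho0 : ∑ i, X i * v i = 0)
    (ho1 : ∀ n, ∑ j, (dX n j * v j + X j * H n j) = 0)
    (hH : ∀ j m, H j m = H m j)
    (hu : ∀ n, u n = ∑ p, G n p * X p)
    (hW : ∀ k, W k = ∑ n, ∑ m, eps n m k * u n * v m)
    (hdu : ∀ j n, du j n = ∑ p, (dG j n p * X p + G n p * dX j p))
    (hdA : ∀ j, dA j = ∑ i, ∑ m, ((dG j i m * X i + G i m * dX j i) * X m + G i m * X i * dX j m))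
    (hL : ∀ i j, L i j = (∑ l, (G j l * dX i l + G i l * dX j l)) + ∑ l, X l * dG l i j)
    (ha : ∀ n, a n = ∑ p, L p n * X p)
    (hpdW : ∀ j k, pdW j k = ∑ n, ∑ m, eps n m k * (du j n * v m + u n * H j m))
    (hpdB : ∀ j k, pdB j k = -(A⁻¹ * A⁻¹) * dA j * (c * X k + W k)
        + A⁻¹ * (c' * v j * X k + c * dX j k + pdW j k))
    (hB : ∀ k, B k = A⁻¹ * (c * X k + W k)) :
    ∀ k, (∑ j, X j * pdB j k) - (∑ j, B j * dX j k)
      = -A⁻¹ * (∑ p, ∑ q, L p q * X p * B q) * X k := by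
  have eG1 : G 1 0 = G 0 1 := hGs 1 0
  have eG2 : G 2 0 = G 0 2 := hGs 2 0
  have eG3 : G 2 1 = G 1 2 := hGs 2 1
  have edG1 : ∀ l, dG l 1 0 = dG l 0 1 := fun l => hdGs l 1 0
  have edG2 : ∀ l, dG l 2 0 = dG l 0 2 := fun l => hdGs l 2 0
  have edG3 : ∀ l, dG l 2 1 = dG l 1 2 := fun l => hdGs l 2 1
  have K1 : ∀ n, ∑ j, X j * du j n = a n - ∑ j, u j * dX n j := by
    intro n
    rcases trich n with rfl|rfl|rfl <;>
    · simp only [hdu, ha, hL, hu, Fin.sum_univ_three, eG1, eG2, eG3, edG1, edG2, edG3]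
      ring
  have K2 : ∀ m, ∑ j, X j * H j m = -∑ j, v j * dX m j := by
    intro m
    have h := ho1 m
    simp only [Fin.sum_univ_three] at h ⊢
    rw [hH 0 m, hH 1 m, hH 2 m]
    linear_combination h
  have K3 : ∀ k, (∑ n, ∑ m, eps n m k * ((∑ j, u j * dX n j) * v m + u n * (∑ j, v j * dX m j)))
      + ∑ j, W j * dX j k = W k * ∑ i, dX i i := by
    intro k; rcases trich k with rfl|rfl|rfl <;>
    · simp only [hW, Fin.sum_univ_three]; norm_num [eps]; ring
  have hAu : A = ∑ n, u n * X n := by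
    rw [hA]; simp only [hu, Fin.sum_univ_three]; ring
  have K4 : ∀ k, (∑ n, u n * X n) * (∑ n, ∑ m, eps n m k * a n * v m)
      = (∑ n, a n * X n) * W k - (∑ n, a n * W n) * X k
        + (∑ n, v n * X n) * (∑ n, ∑ m, eps n m k * a n * u m) := by
    intro k; rcases trich k with rfl|rfl|rfl <;>
    · simp only [hW, Fin.sum_univ_three]; norm_num [eps]; ring
  have hvX : ∑ n, v n * X n = 0 := by
    simp only [Fin.sum_univ_three] at ho0 ⊢; linear_combination ho0
  have T4 : ∀ k, ∑ n, ∑ m, eps n m k * a n * v m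
      = A⁻¹ * ((∑ n, a n * X n) * W k - (∑ n, a n * W n) * X k) := by
    intro k
    have h4 := K4 k
    rw [hvX, zero_mul, add_zero, ← hAu] at h4
    calc ∑ n, ∑ m, eps n m k * a n * v m
        = A⁻¹ * (A * ∑ n, ∑ m, eps n m k * a n * v m) := by
          rw [← mul_assoc, inv_mul_cancel₀ hA0, one_mul]
      _ = _ := by rw [h4]
  have S1 : ∀ k, (∑ j, X j * pdW j k) - ∑ j, W j * dX j k
      = ∑ n, ∑ m, eps n m k * a n * v m := by
    intro k
    have k10 := K1 0; have k11 := K1 1; have k12 := K1 2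
    have k20 := K2 0; have k21 := K2 1; have k22 := K2 2
    have k3 := K3 k
    simp only [Fin.sum_univ_three] at k10 k11 k12 k20 k21 k22 k3 hdiv ⊢
    simp only [hpdW, Fin.sum_univ_three]
    rcases trich k with rfl|rfl|rfl
    · norm_num [eps] at k3 ⊢
      linear_combination v 2 * k11 - v 1 * k12 + u 1 * k22 - u 2 * k21 - k3 - W 0 * hdiv
    · norm_num [eps] at k3 ⊢
      linear_combination v 0 * k12 - v 2 * k10 + u 2 * k20 - u 0 * k22 - k3 - W 1 * hdiv
    · norm_num [eps] at k3 ⊢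
      linear_combination v 1 * k10 - v 0 * k11 + u 0 * k21 - u 1 * k20 - k3 - W 2 * hdiv
  have S2 : ∑ j, X j * dA j = ∑ n, a n * X n := by
    simp only [hdA, ha, hL, Fin.sum_univ_three, eG1, eG2, eG3, edG1, edG2, edG3]
    ring
  intro k
  have t1 : ∑ j, X j * pdB j k
      = -(A⁻¹ * A⁻¹) * (∑ j, X j * dA j) * (c * X k + W k)
        + A⁻¹ * (c' * (∑ i, X i * v i) * X k + c * (∑ j, X j * dX j k)
          + ∑ j, X j * pdW j k) := by
    simp only [hpdB, Fin.sum_univ_three]; ring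
  have t2 : ∑ j, B j * dX j k = A⁻¹ * (c * (∑ j, X j * dX j k) + ∑ j, W j * dX j k) := by
    simp only [hB, Fin.sum_univ_three]; ring
  have t3 : ∑ p, ∑ q, L p q * X p * B q
      = A⁻¹ * (c * (∑ n, a n * X n) + ∑ n, a n * W n) := by
    simp only [hB, ha, Fin.sum_univ_three]; ring
  rw [t1, t2, t3, S2, ho0]
  linear_combination A⁻¹ * (S1 k) + A⁻¹ * (T4 k)

end Helpers

/-- `L_ξ B_g = −|ξ|_g^{-2} (L_ξ g)(ξ, B_g) ξ`; in particular `L_ξ B_g = 0`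
when `ξ` is `g`-Killing. -/
theorem statement14 (U : Set Pt) (hU : IsOpen U)
    (g : Met3) (hg : SmoothMetricOn g U)
    (ξ : VF) (hξ : ContDiffOn ℝ (⊤ : ℕ∞) ξ U) (hξpos : ∀ x ∈ U, 0 < gnormSq g ξ x)
    (hdivξ : ∀ x ∈ U, ediv ξ x = 0)
    (C : ℝ → ℝ) (hC : ContDiff ℝ (⊤ : ℕ∞) C)
    (ψ : Pt → ℝ) (hψ : ContDiffOn ℝ (⊤ : ℕ∞) ψ U)
    (horth : ∀ x ∈ U, edot ξ (egrad ψ) x = 0) :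
    (∀ x ∈ U, ∀ i,
      lieVF ξ (Bg g ξ C ψ) x i
        = -(gnormSq g ξ x)⁻¹ * lieMetPair g ξ ξ (Bg g ξ C ψ) x * ξ x i) ∧
    (IsKillingOn g ξ U → ∀ x ∈ U, ∀ i, lieVF ξ (Bg g ξ C ψ) x i = 0) := by
  have main : ∀ x ∈ U, ∀ i,
      lieVF ξ (Bg g ξ C ψ) x i
        = -(gnormSq g ξ x)⁻¹ * lieMetPair g ξ ξ (Bg g ξ C ψ) x * ξ x i := by
    intro x hx
    have hUx : U ∈ 𝓝 x := hU.mem_nhds hx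
    -- symmetry and determinant facts
    have hgsym : ∀ y ∈ U, ∀ i j, g y i j = g y j i := by
      intro y hy i j
      have h2 := congrFun (congrFun ((hg.2 y hy).1) j) i
      simpa [Matrix.conjTranspose_apply] using h2
    have hdetpos : ∀ y ∈ U, 0 < (g y).det := fun y hy => (hg.2 y hy).det_pos
    -- value of Bg on U
    have hBval : ∀ y, y ∈ U → ∀ k, Bg g ξ C ψ y k
        = (gnormSq g ξ y)⁻¹ * (C (ψ y) * ξ y k
          + ∑ n, ∑ m, eps n m k * (∑ p, g y n p * ξ y p) * pd m ψ y) := by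
      intro y hy k
      have hcr := cross_simp (g y) (fun i j => hgsym y hy i j) (hdetpos y hy).ne'
        (ξ y) (fun m => pd m ψ y) k
      have h2 : sdet g y * gcross g ξ (ggrad g ψ) y k
          = (g y).det * ∑ l, ∑ i, ∑ j, (g y)⁻¹ k l * eps i j l * ξ y i
              * (∑ m, (g y)⁻¹ j m * pd m ψ y) := by
        show sdet g y * (sdet g y * ∑ l, ∑ i, ∑ j,
            (g y)⁻¹ k l * eps i j l * ξ y i * ggrad g ψ y j) = _
        rw [← mul_assoc,
          (show sdet g y * sdet g y = (g y).det from Real.mul_self_sqrt (hdetpos y hy).le)]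
        rfl
      have h1 : sdet g y * gcross g ξ (ggrad g ψ) y k
          = ∑ n, ∑ m, eps n m k * (∑ p, g y n p * ξ y p) * pd m ψ y := by
        rw [h2]; exact hcr
      show (gnormSq g ξ y)⁻¹ * (C (ψ y) * ξ y k + sdet g y * gcross g ξ (ggrad g ψ) y k) = _
      rw [h1]
    -- differentiability at x
    have Dg : ∀ i j, DifferentiableAt ℝ (fun y => g y i j) x :=
      fun i j => diffAt_of_cdOn hU (hg.1 i j) hx
    have Dξ : ∀ i, DifferentiableAt ℝ (fun y => ξ y i) x :=
      fun i => diffAt_of_cdOn hU ((contDiffOn_pi.1 hξ) i) hx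
    have Dψ : DifferentiableAt ℝ ψ x := diffAt_of_cdOn hU hψ hx
    have Dv : ∀ m, DifferentiableAt ℝ (fun y => pd m ψ y) x :=
      fun m => diffAt_of_cdOn hU (contDiffOn_pd hU hψ m) hx
    have DCψ : DifferentiableAt ℝ (fun y => C (ψ y)) x :=
      DifferentiableAt.comp x ((hC.differentiable (by simp)).differentiableAt) Dψ
    have Du : ∀ n, DifferentiableAt ℝ (fun y => ∑ p, g y n p * ξ y p) x :=
      fun n => DifferentiableAt.fun_sum fun p _ => (Dg n p).mul (Dξ p)
    have DW : ∀ k, DifferentiableAt ℝ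
        (fun y => ∑ n, ∑ m, eps n m k * (∑ p, g y n p * ξ y p) * pd m ψ y) x :=
      fun k => DifferentiableAt.fun_sum fun n _ => DifferentiableAt.fun_sum fun m _ =>
        ((differentiableAt_const _).mul (Du n)).mul (Dv m)
    have DA' : DifferentiableAt ℝ (fun y => ∑ i, ∑ m, g y i m * ξ y i * ξ y m) x :=
      DifferentiableAt.fun_sum fun i _ => DifferentiableAt.fun_sum fun m _ =>
        ((Dg i m).mul (Dξ i)).mul (Dξ m)
    have DA : DifferentiableAt ℝ (fun y => gnormSq g ξ y) x := DA'
    have hA0 : gnormSq g ξ x ≠ 0 := (hξpos x hx).ne'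
    -- derivative formulas at x
    have hpdu : ∀ j n, pd j (fun y => ∑ p, g y n p * ξ y p) x
        = ∑ p, (pd j (fun y => g y n p) x * ξ x p + g x n p * pd j (fun y => ξ y p) x) := by
      intro j n
      rw [pd_sum (f := fun p y => g y n p * ξ y p) (fun p => (Dg n p).mul (Dξ p)) j]
      exact Finset.sum_congr rfl fun p _ => pd_mul (Dg n p) (Dξ p) j
    have hpdA : ∀ j, pd j (fun y => gnormSq g ξ y) x
        = ∑ i, ∑ m, ((pd j (fun y => g y i m) x * ξ x i + g x i m * pd j (fun y => ξ y i) x)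
            * ξ x m + g x i m * ξ x i * pd j (fun y => ξ y m) x) := by
      intro j
      have hr : pd j (fun y => gnormSq g ξ y) x
          = pd j (fun y => ∑ i, ∑ m, g y i m * ξ y i * ξ y m) x := rfl
      rw [hr, pd_sum (f := fun i y => ∑ m, g y i m * ξ y i * ξ y m)
        (fun i => DifferentiableAt.fun_sum fun m _ => ((Dg i m).mul (Dξ i)).mul (Dξ m)) j]
      refine Finset.sum_congr rfl fun i _ => ?_
      rw [pd_sum (f := fun m y => g y i m * ξ y i * ξ y m)
        (fun m => ((Dg i m).mul (Dξ i)).mul (Dξ m)) j]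
      refine Finset.sum_congr rfl fun m _ => ?_
      rw [pd_mul ((Dg i m).fun_mul (Dξ i)) (Dξ m) j, pd_mul (Dg i m) (Dξ i) j]
    have hpdW : ∀ j k, pd j (fun y => ∑ n, ∑ m, eps n m k * (∑ p, g y n p * ξ y p)
          * pd m ψ y) x
        = ∑ n, ∑ m, eps n m k * (pd j (fun y => ∑ p, g y n p * ξ y p) x * pd m ψ x
            + (∑ p, g x n p * ξ x p) * pd j (fun y => pd m ψ y) x) := by
      intro j k
      rw [pd_sum (f := fun n y => ∑ m, eps n m k * (∑ p, g y n p * ξ y p) * pd m ψ y)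
        (fun n => DifferentiableAt.fun_sum fun m _ =>
          ((differentiableAt_const _).mul (Du n)).mul (Dv m)) j]
      refine Finset.sum_congr rfl fun n _ => ?_
      rw [pd_sum (f := fun m y => eps n m k * (∑ p, g y n p * ξ y p) * pd m ψ y)
        (fun m => ((differentiableAt_const _).mul (Du n)).mul (Dv m)) j]
      refine Finset.sum_congr rfl fun m _ => ?_
      rw [pd_mul ((differentiableAt_const _).fun_mul (Du n)) (Dv m) j,
        pd_mul (differentiableAt_const _) (Du n) j,
        pd_const (eps n m k) j]
      ring
    have hpdC : ∀ j, pd j (fun y => C (ψ y)) x = deriv C (ψ x) * pd j ψ x :=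
      fun j => pd_comp ((hC.differentiable (by simp)).differentiableAt) Dψ j
    have hBev : ∀ k, (fun y => Bg g ξ C ψ y k) =ᶠ[𝓝 x] (fun y => (gnormSq g ξ y)⁻¹
        * (C (ψ y) * ξ y k + ∑ n, ∑ m, eps n m k * (∑ p, g y n p * ξ y p) * pd m ψ y)) :=
      fun k => Filter.eventuallyEq_of_mem hUx (fun y hy => hBval y hy k)
    have hpdBt : ∀ j k, pd j (fun y => Bg g ξ C ψ y k) x
        = -((gnormSq g ξ x)⁻¹ * (gnormSq g ξ x)⁻¹) * (pd j (fun y => gnormSq g ξ y) x)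
            * (C (ψ x) * ξ x k + ∑ n, ∑ m, eps n m k * (∑ p, g x n p * ξ x p) * pd m ψ x)
          + (gnormSq g ξ x)⁻¹ * (deriv C (ψ x) * pd j ψ x * ξ x k
            + C (ψ x) * pd j (fun y => ξ y k) x
            + pd j (fun y => ∑ n, ∑ m, eps n m k * (∑ p, g y n p * ξ y p) * pd m ψ y) x) := by
      intro j k
      rw [pd_congr_nhds (hBev k) j]
      rw [pd_mul (DA.fun_inv hA0) ((DCψ.fun_mul (Dξ k)).fun_add (DW k)) j]
      rw [pd_inv DA hA0 j]
      rw [pd_add (DCψ.fun_mul (Dξ k)) (DW k) j]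
      rw [pd_mul DCψ (Dξ k) j]
      rw [hpdC j]
      have hsq : ((gnormSq g ξ x) ^ 2)⁻¹ = (gnormSq g ξ x)⁻¹ * (gnormSq g ξ x)⁻¹ := by
        rw [sq, mul_inv]
      rw [hsq]
    -- constraints
    have hdiv0 : ∑ i, pd i (fun y => ξ y i) x = 0 := hdivξ x hx
    have ho0 : ∑ i, ξ x i * pd i ψ x = 0 := horth x hx
    have ho1 : ∀ n, ∑ j, (pd n (fun y => ξ y j) x * pd j ψ x
        + ξ x j * pd n (fun y => pd j ψ y) x) = 0 := by
      intro n
      have hev : (fun y => ∑ i, ξ y i * pd i ψ y) =ᶠ[𝓝 x] (fun _ => (0:ℝ)) :=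
        Filter.eventuallyEq_of_mem hUx (fun y hy => horth y hy)
      have h0 : pd n (fun y => ∑ i, ξ y i * pd i ψ y) x = 0 := by
        rw [pd_congr_nhds hev n]
        exact pd_const 0 n
      rw [pd_sum (f := fun i y => ξ y i * pd i ψ y) (fun i => (Dξ i).mul (Dv i)) n] at h0
      rw [← h0]
      exact Finset.sum_congr rfl fun p _ => (pd_mul (Dξ p) (Dv p) n).symm
    have hHsym : ∀ j m, pd j (fun y => pd m ψ y) x = pd m (fun y => pd j ψ y) x :=
      pd_pd_symm hU hψ hx
    -- Christoffel contraction and lieMet formula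
    have hsinv : ∀ a b, (g x)⁻¹ a b = (g x)⁻¹ b a := by
      intro a b
      have hT : (g x).transpose = g x := Matrix.ext fun i j => hgsym x hx j i
      have h1 : ((g x)⁻¹).transpose = (g x)⁻¹ := by
        rw [Matrix.transpose_nonsing_inv, hT]
      have h2 := congrFun (congrFun h1 b) a
      rw [Matrix.transpose_apply] at h2
      exact h2
    have hid : ∀ m l : Fin 3, (g x)⁻¹ 0 m * g x 0 l + (g x)⁻¹ 1 m * g x 1 l
        + (g x)⁻¹ 2 m * g x 2 l = if m = l then 1 else 0 := by
      intro m l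
      have h1 : (g x)⁻¹ * g x = 1 :=
        Matrix.nonsing_inv_mul _ (Ne.isUnit (hdetpos x hx).ne')
      have h2 := congrFun (congrFun h1 m) l
      rw [Matrix.mul_apply, Fin.sum_univ_three, Matrix.one_apply] at h2
      rw [hsinv 0 m, hsinv 1 m, hsinv 2 m]
      exact h2
    have hchr : ∀ i j, (2:ℝ) * ∑ k, ∑ l, christoffel g x k i j * g x k l * ξ x l
        = ∑ l, (pd i (fun y => g y j l) x + pd j (fun y => g y i l) x
            - pd l (fun y => g y i j) x) * ξ x l := by
      intro i j
      have q00 := hid 0 0; rw [if_pos rfl] at q00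
      have q11 := hid 1 1; rw [if_pos rfl] at q11
      have q22 := hid 2 2; rw [if_pos rfl] at q22
      have q01 := hid 0 1; rw [if_neg (by decide)] at q01
      have q02 := hid 0 2; rw [if_neg (by decide)] at q02
      have q10 := hid 1 0; rw [if_neg (by decide)] at q10
      have q12 := hid 1 2; rw [if_neg (by decide)] at q12
      have q20 := hid 2 0; rw [if_neg (by decide)] at q20
      have q21 := hid 2 1; rw [if_neg (by decide)] at q21
      simp only [christoffel, Fin.sum_univ_three]
      linear_combination
        (pd i (fun y => g y j 0) x + pd j (fun y => g y i 0) x - pd 0 (fun y => g y i j) x)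
          * (ξ x 0 * q00 + ξ x 1 * q01 + ξ x 2 * q02)
        + (pd i (fun y => g y j 1) x + pd j (fun y => g y i 1) x - pd 1 (fun y => g y i j) x)
          * (ξ x 0 * q10 + ξ x 1 * q11 + ξ x 2 * q12)
        + (pd i (fun y => g y j 2) x + pd j (fun y => g y i 2) x - pd 2 (fun y => g y i j) x)
          * (ξ x 0 * q20 + ξ x 1 * q21 + ξ x 2 * q22)
    have hLie : ∀ i j, lieMet g ξ x i j
        = (∑ l, (g x j l * pd i (fun y => ξ y l) x + g x i l * pd j (fun y => ξ y l) x))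
          + ∑ l, ξ x l * pd l (fun y => g y i j) x := by
      intro i j
      show pd i (fun y => ∑ l, g y j l * ξ y l) x + pd j (fun y => ∑ l, g y i l * ξ y l) x
          - 2 * ∑ k, ∑ l, christoffel g x k i j * g x k l * ξ x l = _
      rw [hpdu i j, hpdu j i, hchr i j]
      simp only [Fin.sum_univ_three]
      ring
    have hdGs : ∀ l i j, pd l (fun y => g y i j) x = pd l (fun y => g y j i) x :=
      fun l i j => pd_congr_nhds (Filter.eventuallyEq_of_mem hUx
        (fun y hy => hgsym y hy i j)) l
    have key := master (fun i j => g x i j) (fun l i j => pd l (fun y => g y i j) x)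
      (ξ x) (fun j i => pd j (fun y => ξ y i) x) (fun m => pd m ψ x)
      (fun j m => pd j (fun y => pd m ψ y) x) (C (ψ x)) (deriv C (ψ x)) (gnormSq g ξ x)
      (fun n => ∑ p, g x n p * ξ x p)
      (fun k => ∑ n, ∑ m, eps n m k * (∑ p, g x n p * ξ x p) * pd m ψ x)
      (fun n => ∑ p, lieMet g ξ x p n * ξ x p)
      (fun j => pd j (fun y => gnormSq g ξ y) x)
      (fun k => Bg g ξ C ψ x k)
      (fun j n => pd j (fun y => ∑ p, g y n p * ξ y p) x)
      (fun j k => pd j (fun y => ∑ n, ∑ m, eps n m k * (∑ p, g y n p * ξ y p) * pd m ψ y) x)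
      (fun j k => pd j (fun y => Bg g ξ C ψ y k) x)
      (fun i j => lieMet g ξ x i j)
      (fun i j => hgsym x hx i j) hdGs rfl hA0 hdiv0 ho0 ho1 hHsym
      (fun n => rfl) (fun k => rfl) hpdu hpdA hLie (fun n => rfl) hpdW hpdBt
      (fun k => hBval x hx k)
    intro i
    simp only [lieVF, lieMetPair]
    simpa using key i
  refine ⟨main, ?_⟩
  intro hK x hx i
  rw [main x hx i]
  have hz : lieMetPair g ξ ξ (Bg g ξ C ψ) x = 0 := by
    simp [lieMetPair, hK x hx]
  rw [hz]
  ring
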